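/- Let R be a ring, σ an automorphism of R, δ a σ-derivation, S = R[x; σ, δ], and M a right R-module satisfying the weak (σ, δ)-compatibility condition. Then for every good polynomial m ∈ M ⊗_R S whose leading coefficient has (σ, σ^{-1}, δ)-stable annihilator, and every n ∈ ℕ, the polynomial m x^n is good; hence M ⊗_R S is a good module. -/
import Mathlib


open MulOpposite

/-- `δ` is a `σ`-derivation of the ring `R`. -/
def IsSigmaDeriv {R : Type} [Ring R] (σ : R ≃+* R) (δ : R → R) : Prop :=
  (∀ a b, δ (a + b) = δ a + δ b) ∧ ∀ a b, δ (a * b) = σ a * δ b + δ a * b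

/-- A presentation of the skew polynomial ring `S = R[x; σ, δ]`: `S` is a ring containing an
image of `R` via `ι`, with an element `x` satisfying `x·r = σ(r)·x + δ(r)`, and `S` is free
as a left `R`-module with basis the powers of `x`. -/
structure SkewPoly (R S : Type) [Ring R] [Ring S] (σ : R ≃+* R) (δ : R → R) : Type where
  ι : R →+* S
  x : S
  comm : ∀ r : R, x * ι r = ι (σ r) * x + ι (δ r)
  basis : Function.Bijective fun c : ℕ →₀ R => c.sum fun i a => ι a * x ^ i

/-- A presentation of the induced right `S`-module `M ⊗_R S` of a right `R`-module `M`
(right modules are encoded as modules over the opposite ring): `N` is a right `S`-module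
containing `M` via `j`, compatibly with the right `R`-actions, and every element of `N` is
uniquely a polynomial `∑ (j mᵢ)·xⁱ` with coefficients in `M`. -/
structure Induced (R S M N : Type) [Ring R] [Ring S] [AddCommGroup M] [Module Rᵐᵒᵖ M]
    [AddCommGroup N] [Module Sᵐᵒᵖ N] {σ : R ≃+* R} {δ : R → R}
    (sp : SkewPoly R S σ δ) : Type where
  j : M →+ N
  j_smul : ∀ (r : R) (m : M), j (op r • m) = op (sp.ι r) • j m
  free : Function.Bijective fun c : ℕ →₀ M => c.sum fun i m => op (sp.x ^ i) • j m

variable {R S M N : Type} [Ring R] [Ring S] [AddCommGroup M] [Module Rᵐᵒᵖ M]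
  [AddCommGroup N] [Module Sᵐᵒᵖ N] {σ : R ≃+* R} {δ : R → R}

/-- The polynomial `∑ (j mᵢ)·xⁱ` in `M ⊗_R S` with coefficient family `c`. -/
def pol (sp : SkewPoly R S σ δ) (im : Induced R S M N sp) (c : ℕ →₀ M) : N :=
  c.sum fun i m => op (sp.x ^ i) • im.j m

/-- `ν ∈ M ⊗_R S` has degree exactly `k`. -/
def DegEq (sp : SkewPoly R S σ δ) (im : Induced R S M N sp) (ν : N) (k : ℕ) : Prop :=
  ∃ c : ℕ →₀ M, pol sp im c = ν ∧ c k ≠ 0 ∧ ∀ i, k < i → c i = 0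

/-- `ν` is a good polynomial of degree `k`: whenever `ν·r ≠ 0` for `r ∈ R`,
`deg (ν·r) = deg ν = k`. -/
def GoodAt (sp : SkewPoly R S σ δ) (im : Induced R S M N sp) (ν : N) (k : ℕ) : Prop :=
  DegEq sp im ν k ∧ ∀ r : R, op (sp.ι r) • ν ≠ 0 → DegEq sp im (op (sp.ι r) • ν) k

/-- `ν` is a good polynomial. -/
def Good (sp : SkewPoly R S σ δ) (im : Induced R S M N sp) (ν : N) : Prop :=
  ∃ k, GoodAt sp im ν k

/-- An ideal-like subset `J ⊆ R` is `(σ, σ⁻¹, δ)`-stable: `σ(J) = J` and `δ(J) ⊆ J`. -/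
def StableSet (σ : R ≃+* R) (δ : R → R) (J : Set R) : Prop :=
  ⇑σ '' J = J ∧ δ '' J ⊆ J

section Aux

variable (sp : SkewPoly R S σ δ) (im : Induced R S M N sp)

/-- The bundled version of `pol`. -/
noncomputable def polHom : (ℕ →₀ M) →+ N :=
  Finsupp.liftAddHom fun i => (DistribMulAction.toAddMonoidHom N (op (sp.x ^ i))).comp im.j

lemma pol_eq (c : ℕ →₀ M) : pol sp im c = polHom sp im c := by
  rw [polHom, Finsupp.liftAddHom_apply]; rfl

lemma pol_zero : pol sp im 0 = 0 := by rw [pol_eq]; exact map_zero _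

lemma pol_add (c d : ℕ →₀ M) : pol sp im (c + d) = pol sp im c + pol sp im d := by
  rw [pol_eq, pol_eq, pol_eq]; exact map_add _ _ _

lemma pol_injective : Function.Injective (pol sp im) := im.free.injective

lemma pol_single (i : ℕ) (m : M) :
    pol sp im (Finsupp.single i m) = op (sp.x ^ i) • im.j m :=
  Finsupp.sum_single_index (by simp)

lemma pol_mapDomain (c : ℕ →₀ M) :
    pol sp im (Finsupp.mapDomain Nat.succ c) = op sp.x • pol sp im c := by
  unfold pol
  rw [Finsupp.sum_mapDomain_index_inj Nat.succ_injective, Finsupp.smul_sum]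
  refine Finsupp.sum_congr fun i _ => ?_
  rw [pow_succ, op_mul, mul_smul]

/-- The coefficient families giving the action of `ι r` on a monomial `j m · xⁱ`. -/
noncomputable def tmap (σ : R ≃+* R) (δ : R → R) (i : ℕ) : R → M → (ℕ →₀ M) :=
  Nat.rec (fun r m => Finsupp.single 0 (op r • m))
    (fun _ prev r m => Finsupp.mapDomain Nat.succ (prev (σ r) m) + prev (δ r) m) i

lemma tmap_zero_def (r : R) (m : M) : tmap σ δ 0 r m = Finsupp.single 0 (op r • m) := rfl

lemma tmap_succ_def (i : ℕ) (r : R) (m : M) :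
    tmap σ δ (i + 1) r m
      = Finsupp.mapDomain Nat.succ (tmap σ δ i (σ r) m) + tmap σ δ i (δ r) m := rfl

lemma tmap_zero : ∀ (i : ℕ) (r : R), tmap σ δ i r (0 : M) = 0 := by
  intro i
  induction i with
  | zero => intro r; simp [tmap_zero_def]
  | succ n ih => intro r; simp [tmap_succ_def, ih]

lemma tmap_bound : ∀ (i : ℕ) (r : R) (m : M) (t : ℕ), i < t → tmap σ δ i r m t = 0 := by
  intro i
  induction i with
  | zero =>
    intro r m t ht
    exact Finsupp.single_eq_of_ne (by omega)
  | succ n ih =>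
    intro r m t ht
    obtain ⟨u, rfl⟩ : ∃ u, t = u + 1 := ⟨t - 1, by omega⟩
    rw [tmap_succ_def, Finsupp.add_apply,
      show (u + 1) = Nat.succ u from rfl,
      Finsupp.mapDomain_apply Nat.succ_injective,
      ih (σ r) m u (by omega), ih (δ r) m (u + 1) (by omega), add_zero]

lemma tmap_top : ∀ (i : ℕ) (r : R) (m : M), tmap σ δ i r m i = op (σ^[i] r) • m := by
  intro i
  induction i with
  | zero => intro r m; simp [tmap_zero_def]
  | succ n ih =>
    intro r m
    rw [tmap_succ_def, Finsupp.add_apply,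
      show (n + 1) = Nat.succ n from rfl,
      Finsupp.mapDomain_apply Nat.succ_injective,
      ih (σ r) m, tmap_bound n (δ r) m (Nat.succ n) (by omega), add_zero,
      ← Function.iterate_succ_apply]

lemma pol_tmap : ∀ (i : ℕ) (r : R) (m : M),
    pol sp im (tmap σ δ i r m) = op (sp.x ^ i * sp.ι r) • im.j m := by
  intro i
  induction i with
  | zero =>
    intro r m
    rw [tmap_zero_def, pol_single, pow_zero, op_one, one_smul, im.j_smul, one_mul]
  | succ n ih =>
    intro r m
    rw [tmap_succ_def, pol_add, pol_mapDomain, ih (σ r) m, ih (δ r) m, smul_smul, ← op_mul,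
      ← add_smul, ← op_add]
    have : sp.x ^ n * sp.ι (σ r) * sp.x + sp.x ^ n * sp.ι (δ r)
        = sp.x ^ (n + 1) * sp.ι r := by
      rw [pow_succ, mul_assoc (sp.x ^ n) sp.x (sp.ι r), sp.comm r, mul_add, mul_assoc]
    rw [this]

/-- The coefficient family of `ν · r` where `ν` has coefficient family `c`. -/
noncomputable def Tc (σ : R ≃+* R) (δ : R → R) (r : R) (c : ℕ →₀ M) : ℕ →₀ M :=
  c.sum fun i m => tmap σ δ i r m

lemma pol_Tc (r : R) (c : ℕ →₀ M) :
    pol sp im (Tc σ δ r c) = op (sp.ι r) • pol sp im c := by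
  rw [Tc, Finsupp.sum, pol_eq, map_sum]
  conv_rhs => rw [pol, Finsupp.sum]
  rw [Finset.smul_sum]
  refine Finset.sum_congr rfl fun i _ => ?_
  rw [← pol_eq, pol_tmap, smul_smul, ← op_mul]

lemma Tc_apply_le (r : R) (c : ℕ →₀ M) (k : ℕ) (hb : ∀ i, k < i → c i = 0) :
    Tc σ δ r c k = op (σ^[k] r) • c k := by
  rw [Tc, Finsupp.sum_apply, Finsupp.sum, Finset.sum_eq_single k]
  · exact tmap_top k r (c k)
  · intro i hi hne
    have hik : i ≤ k := by
      by_contra h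
      exact (Finsupp.mem_support_iff.mp hi) (hb i (by omega))
    exact tmap_bound i r (c i) k (by omega)
  · intro hk
    rw [Finsupp.notMem_support_iff.mp hk, tmap_zero, Finsupp.zero_apply]

lemma Tc_bound (r : R) (c : ℕ →₀ M) (k : ℕ) (hb : ∀ i, k < i → c i = 0) :
    ∀ t, k < t → Tc σ δ r c t = 0 := by
  intro t ht
  rw [Tc, Finsupp.sum_apply, Finsupp.sum]
  refine Finset.sum_eq_zero fun i hi => ?_
  have hik : i ≤ k := by
    by_contra h
    exact (Finsupp.mem_support_iff.mp hi) (hb i (by omega))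
  exact tmap_bound i r (c i) t (by omega)

lemma stable_iterate {J : Set R} (hJ : ⇑σ '' J = J) : ∀ (k : ℕ) (r : R),
    σ^[k] r ∈ J ↔ r ∈ J := by
  have h1 : ∀ r, σ r ∈ J ↔ r ∈ J := by
    intro r
    constructor
    · intro h
      rw [← hJ] at h
      obtain ⟨u, hu, he⟩ := h
      rwa [← σ.injective he]
    · intro h
      rw [← hJ]
      exact ⟨r, h, rfl⟩
  intro k
  induction k with
  | zero => simp
  | succ n ih => intro r; rw [Function.iterate_succ_apply, ih, h1]

lemma mapDomain_succ_apply_succ (c : ℕ →₀ M) (i : ℕ) :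
    Finsupp.mapDomain Nat.succ c (i + 1) = c i :=
  Finsupp.mapDomain_apply Nat.succ_injective c i

lemma mapDomain_succ_bound (c : ℕ →₀ M) (k : ℕ) (hb : ∀ i, k < i → c i = 0) :
    ∀ i, k + 1 < i → Finsupp.mapDomain Nat.succ c i = 0 := by
  intro i hi
  obtain ⟨u, rfl⟩ : ∃ u, i = u + 1 := ⟨i - 1, by omega⟩
  rw [mapDomain_succ_apply_succ]
  exact hb u (by omega)

lemma step (c : ℕ →₀ M) (k : ℕ) (hk : c k ≠ 0) (hb : ∀ i, k < i → c i = 0)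
    (hg : GoodAt sp im (pol sp im c) k)
    (hst : StableSet σ δ {t : R | op t • c k = 0}) :
    GoodAt sp im (pol sp im (Finsupp.mapDomain Nat.succ c)) (k + 1) := by
  constructor
  · exact ⟨_, rfl, by rw [mapDomain_succ_apply_succ]; exact hk, mapDomain_succ_bound c k hb⟩
  · intro r hr
    have key : op (sp.ι r) • pol sp im (Finsupp.mapDomain Nat.succ c)
        = op sp.x • (op (sp.ι (σ r)) • pol sp im c) + op (sp.ι (δ r)) • pol sp im c := by
      rw [pol_mapDomain, smul_smul, ← op_mul, sp.comm r, op_add, add_smul, op_mul, mul_smul]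
    by_cases hA : op (sp.ι (σ r)) • pol sp im c = 0
    · exfalso
      have h1 : Tc σ δ (σ r) c = 0 :=
        pol_injective sp im (by rw [pol_Tc, hA, pol_zero])
      have h2 : op (σ^[k] (σ r)) • c k = 0 := by
        rw [← Tc_apply_le (σ := σ) (δ := δ) (σ r) c k hb, h1, Finsupp.zero_apply]
      have h3 : σ^[k + 1] r ∈ {t : R | op t • c k = 0} := by
        rw [Set.mem_setOf_eq, Function.iterate_succ_apply]
        exact h2
      have h4 : r ∈ {t : R | op t • c k = 0} := (stable_iterate hst.1 (k + 1) r).mp h3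
      have h5 : δ r ∈ {t : R | op t • c k = 0} := hst.2 ⟨r, h4, rfl⟩
      have h6 : σ^[k] (δ r) ∈ {t : R | op t • c k = 0} :=
        (stable_iterate hst.1 k (δ r)).mpr h5
      have hB : op (sp.ι (δ r)) • pol sp im c = 0 := by
        by_contra hB
        obtain ⟨e, he, hek, _⟩ := hg.2 (δ r) hB
        have heq : e = Tc σ δ (δ r) c :=
          pol_injective sp im (by rw [he, pol_Tc])
        rw [heq, Tc_apply_le (σ := σ) (δ := δ) (δ r) c k hb] at hek
        exact hek h6
      rw [key, hA, hB, smul_zero, add_zero] at hr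
      exact hr rfl
    · obtain ⟨e, he, hek, heb⟩ := hg.2 (σ r) hA
      have hB : ∃ e₂ : ℕ →₀ M, pol sp im e₂ = op (sp.ι (δ r)) • pol sp im c ∧
          ∀ i, k < i → e₂ i = 0 := by
        by_cases hB : op (sp.ι (δ r)) • pol sp im c = 0
        · exact ⟨0, by rw [pol_zero, hB], fun i _ => rfl⟩
        · obtain ⟨e₂, h1, _, h3⟩ := hg.2 (δ r) hB
          exact ⟨e₂, h1, h3⟩
      obtain ⟨e₂, he₂, he₂b⟩ := hB
      refine ⟨Finsupp.mapDomain Nat.succ e + e₂, ?_, ?_, ?_⟩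
      · rw [pol_add, pol_mapDomain, he, he₂, key]
      · rw [Finsupp.add_apply, mapDomain_succ_apply_succ, he₂b (k + 1) (by omega), add_zero]
        exact hek
      · intro i hi
        rw [Finsupp.add_apply, mapDomain_succ_bound e k heb i hi, he₂b i (by omega), add_zero]

lemma main (c : ℕ →₀ M) (k : ℕ) (hk : c k ≠ 0) (hb : ∀ i, k < i → c i = 0)
    (hg : GoodAt sp im (pol sp im c) k)
    (hst : StableSet σ δ {t : R | op t • c k = 0}) :
    ∀ n : ℕ, ∃ d : ℕ →₀ M, pol sp im d = op (sp.x ^ n) • pol sp im c ∧ d (k + n) = c k ∧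
      (∀ i, k + n < i → d i = 0) ∧ GoodAt sp im (pol sp im d) (k + n) := by
  intro n
  induction n with
  | zero => exact ⟨c, by rw [pow_zero, op_one, one_smul], rfl, hb, hg⟩
  | succ n ih =>
    obtain ⟨d, hd, hdt, hdb, hdg⟩ := ih
    have hdk : d (k + n) ≠ 0 := by rw [hdt]; exact hk
    have hst' : StableSet σ δ {t : R | op t • d (k + n) = 0} := by rw [hdt]; exact hst
    refine ⟨Finsupp.mapDomain Nat.succ d, ?_, ?_, ?_,
      step sp im d (k + n) hdk hdb hdg hst'⟩
    · rw [pol_mapDomain, hd, smul_smul, ← op_mul, ← pow_succ]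
    · rw [show k + (n + 1) = (k + n) + 1 from rfl, mapDomain_succ_apply_succ]
      exact hdt
    · intro i hi
      exact mapDomain_succ_bound d (k + n) hdb i (by omega)

end Aux

/-- if `M` satisfies the weak `(σ, δ)`-compatibility condition, then for every
good polynomial `m` whose leading coefficient has `(σ, σ⁻¹, δ)`-stable annihilator and every
`n ∈ ℕ`, the polynomial `m·xⁿ` is good; hence `M ⊗_R S` is a good module. -/
theorem stmt14 (sp : SkewPoly R S σ δ) (im : Induced R S M N sp) (hδ : IsSigmaDeriv σ δ)
    (hcompat : ∀ P : Submodule Rᵐᵒᵖ M, P ≠ ⊥ →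
      ∃ a ∈ P, a ≠ (0 : M) ∧ StableSet σ δ {t : R | op t • a = 0}) :
    (∀ (ν : N) (k : ℕ) (c : ℕ →₀ M), pol sp im c = ν → c k ≠ 0 → (∀ i, k < i → c i = 0) →
      GoodAt sp im ν k → StableSet σ δ {t : R | op t • c k = 0} →
      ∀ n : ℕ, Good sp im (op (sp.x ^ n) • ν)) ∧
    (∀ (ν : N) (k : ℕ), GoodAt sp im ν k →
      ∀ n, k ≤ n → ∃ f : S, GoodAt sp im (op f • ν) n) := by
  constructor
  · intro ν k c hpol hk hb hg hst n
    subst hpol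
    obtain ⟨d, hd, _, _, hdg⟩ := main sp im c k hk hb hg hst n
    exact ⟨k + n, by rw [← hd]; exact hdg⟩
  · intro ν k hg n hn
    obtain ⟨c, hpol, hk, hb⟩ := hg.1
    subst hpol
    have hPne : Submodule.span Rᵐᵒᵖ {c k} ≠ ⊥ := by
      intro h
      exact hk (Submodule.span_eq_bot.mp h (c k) (Set.mem_singleton _))
    obtain ⟨a, haP, ha0, hstab⟩ := hcompat _ hPne
    obtain ⟨u, hu⟩ := Submodule.mem_span_singleton.mp haP
    set s : R := (⇑σ.symm)^[k] u.unop with hs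
    have hts : σ^[k] s = u.unop :=
      Function.LeftInverse.iterate (g := ⇑σ) (f := ⇑σ.symm)
        (fun y => σ.apply_symm_apply y) k u.unop
    have hTk : Tc σ δ s c k = a := by
      rw [Tc_apply_le (σ := σ) (δ := δ) s c k hb, hts, op_unop]
      exact hu
    have hν' : pol sp im (Tc σ δ s c) = op (sp.ι s) • pol sp im c := pol_Tc sp im s c
    have hTk0 : Tc σ δ s c k ≠ 0 := by rw [hTk]; exact ha0
    have hTb : ∀ i, k < i → Tc σ δ s c i = 0 :=
      fun i hi => Tc_bound (σ := σ) (δ := δ) s c k hb i hi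
    have hg' : GoodAt sp im (pol sp im (Tc σ δ s c)) k := by
      constructor
      · exact ⟨Tc σ δ s c, rfl, hTk0, hTb⟩
      · intro r hr
        have hrw : op (sp.ι r) • pol sp im (Tc σ δ s c)
            = op (sp.ι (s * r)) • pol sp im c := by
          rw [hν', smul_smul, ← op_mul, ← map_mul]
        rw [hrw] at hr ⊢
        exact hg.2 (s * r) hr
    have hst' : StableSet σ δ {t : R | op t • Tc σ δ s c k = 0} := by
      rw [hTk]; exact hstab
    obtain ⟨d, hd, _, _, hdg⟩ := main sp im (Tc σ δ s c) k hTk0 hTb hg' hst' (n - k)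
    refine ⟨sp.ι s * sp.x ^ (n - k), ?_⟩
    have hrw : op (sp.ι s * sp.x ^ (n - k)) • pol sp im c = pol sp im d := by
      rw [op_mul, mul_smul, ← hν', ← hd]
    rw [hrw, show n = k + (n - k) from by omega]
    exact hdg
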